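/- Fix $K > 0$, $K \neq 1$, and let $y(t)$ be the solution of $y' = \frac{(1-y)K}{y^2+(1-y^2)K} - 1$, $y(0)=1$. Then $y$ is strictly monotone decreasing in $t$ on $[0,\infty)$. -/

import Mathlib

/-!
Write `g(z) = (1 - z)K / (z² + (1 - z²)K) - 1`, so that `y' = g(y)`. On `(0, 1]` the field
satisfies `-(K + 1/K) z < g(z) < 0`, and `g(1) = -1`. Hence the constant `1` and the
exponential `e^{-(K + 1/K) t}` are barriers (`y` can cross neither of them), which traps `y` in
`(0, 1]`, where `y' = g(y) < 0`. The lower barrier is needed because `g(0) = 0`: a mere sign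
argument could not rule out `y` reaching the equilibrium `0`.
-/

open Set Real

section Fencing

variable {f f' B B' : ℝ → ℝ} {a : ℝ}

theorem le_of_hasDerivAt_lt_boundary (hf : ∀ t, a ≤ t → HasDerivAt f (f' t) t)
    (hB : ∀ t, HasDerivAt B (B' t) t) (ha : f a ≤ B a)
    (bound : ∀ t, a ≤ t → f t = B t → f' t < B' t) : ∀ t, a ≤ t → f t ≤ B t := fun _ ht =>
  image_le_of_deriv_right_lt_deriv_boundary
    (fun x hx => (hf x hx.1).continuousAt.continuousWithinAt)
    (fun x hx => (hf x hx.1).hasDerivWithinAt) ha hB (fun x hx => bound x hx.1) ⟨ht, le_rfl⟩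

theorem le_of_hasDerivAt_gt_boundary (hf : ∀ t, a ≤ t → HasDerivAt f (f' t) t)
    (hB : ∀ t, HasDerivAt B (B' t) t) (ha : B a ≤ f a)
    (bound : ∀ t, a ≤ t → f t = B t → B' t < f' t) : ∀ t, a ≤ t → B t ≤ f t := by
  have := le_of_hasDerivAt_lt_boundary (f := -f) (B := -B) (fun t ht => (hf t ht).neg)
    (fun t => (hB t).neg) (neg_le_neg ha)
    (fun t ht h => neg_lt_neg (bound t ht (neg_inj.mp h)))
  exact fun t ht => neg_le_neg_iff.mp (this t ht)

end Fencing

noncomputable def odeRhs (K z : ℝ) : ℝ := (1 - z) * K / (z ^ 2 + (1 - z ^ 2) * K) - 1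

section OdeRhs

variable {K z : ℝ}

@[simp]
theorem odeRhs_one : odeRhs K 1 = -1 := by
  simp [odeRhs]

theorem odeRhs_denom_pos (hK : 0 < K) (hz : z ^ 2 ≤ 1) : 0 < z ^ 2 + (1 - z ^ 2) * K := by
  nlinarith [sq_nonneg z, mul_nonneg (sub_nonneg.mpr hz) hK.le]

theorem odeRhs_eq (hD : z ^ 2 + (1 - z ^ 2) * K ≠ 0) :
    odeRhs K z = -(z * (z + K * (1 - z))) / (z ^ 2 + (1 - z ^ 2) * K) := by
  rw [odeRhs, div_sub_one hD]
  ring_nf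

theorem odeRhs_neg (hK : 0 < K) (hz₀ : 0 < z) (hz₁ : z ≤ 1) : odeRhs K z < 0 := by
  have hD := odeRhs_denom_pos hK (pow_le_one₀ hz₀.le hz₁)
  rw [odeRhs_eq hD.ne', neg_div, neg_lt_zero]
  have : 0 ≤ K * (1 - z) := mul_nonneg hK.le (sub_nonneg.mpr hz₁)
  positivity

theorem neg_mul_lt_odeRhs (hK : 0 < K) (hz₀ : 0 < z) (hz₁ : z ≤ 1) :
    -((K + K⁻¹) * z) < odeRhs K z := by
  have hz2 : z ^ 2 ≤ 1 := pow_le_one₀ hz₀.le hz₁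
  have hD := odeRhs_denom_pos hK hz2
  have hKK : K * K⁻¹ = 1 := mul_inv_cancel₀ hK.ne'
  -- `z + K(1 - z) ≤ max 1 K`, while the denominator is at least `min 1 K`
  have hnum : z + K * (1 - z) < (K + K⁻¹) * (z ^ 2 + (1 - z ^ 2) * K) := by
    rcases le_total K 1 with hK1 | hK1
    · nlinarith [mul_nonneg hz₀.le (sub_nonneg.mpr hK1), mul_nonneg (sq_nonneg z)
        (sub_nonneg.mpr hK1), mul_pos hK hK, inv_pos.mpr hK]
    · nlinarith [mul_nonneg (sub_nonneg.mpr hz₁) (sub_nonneg.mpr hK1), mul_nonneg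
        (sub_nonneg.mpr hz2) (sub_nonneg.mpr hK1), inv_pos.mpr hK, mul_pos hK hD]
  rw [odeRhs_eq hD.ne', lt_div_iff₀ hD]
  nlinarith [mul_lt_mul_of_pos_left hnum hz₀]

end OdeRhs

theorem stmt_7_general (K : ℝ) (hK : 0 < K) (y : ℝ → ℝ) (hy0 : y 0 = 1)
    (hy : ∀ t, 0 ≤ t →
      HasDerivAt y ((1 - y t) * K / ((y t) ^ 2 + (1 - (y t) ^ 2) * K) - 1) t) :
    StrictAntiOn y (Set.Ici 0) := by
  have hy' : ∀ t, 0 ≤ t → HasDerivAt y (odeRhs K (y t)) t := hy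
  have le_one : ∀ t, 0 ≤ t → y t ≤ 1 :=
    le_of_hasDerivAt_lt_boundary hy' (fun _ => hasDerivAt_const _ 1) hy0.le
      (fun t _ h => by simp [h])
  set M := K + K⁻¹
  have exp_le : ∀ t, 0 ≤ t → exp (-M * t) ≤ y t := by
    refine le_of_hasDerivAt_gt_boundary hy' (fun t => ((hasDerivAt_id t).const_mul (-M)).exp)
      (by simp [hy0]) fun t ht h => ?_
    have := neg_mul_lt_odeRhs hK (h ▸ exp_pos _) (le_one t ht)
    rw [id, ← h]
    linarith
  refine strictAntiOn_of_hasDerivWithinAt_neg (convex_Ici 0)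
    (fun t ht => (hy' t ht).continuousAt.continuousWithinAt)
    (fun t ht => (hy' t (interior_subset ht)).hasDerivWithinAt) fun t ht => ?_
  have ht : 0 ≤ t := interior_subset ht
  exact odeRhs_neg hK ((exp_pos _).trans_le (exp_le t ht)) (le_one t ht)

/-- For `K > 0`, `K ≠ 1`, the solution of `y' = (1-y)K/(y²+(1-y²)K) - 1`,
`y(0)=1`, is strictly monotone decreasing on `[0,∞)`. -/
theorem stmt_7 (K : ℝ) (hK : 0 < K) (hK1 : K ≠ 1) (y : ℝ → ℝ) (hy0 : y 0 = 1)
    (hy : ∀ t, 0 ≤ t →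
      HasDerivAt y ((1 - y t) * K / ((y t) ^ 2 + (1 - (y t) ^ 2) * K) - 1) t) :
    StrictAntiOn y (Set.Ici 0) :=
  stmt_7_general K hK y hy0 hy
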